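/- arXiv:1605.07221 — 2 statements merged into one kernel-verified Lean document; each statement's English description precedes it below -/
import Mathlib

section
/- Suppose the measurement operator satisfies (2r, δ)-RIP. Then for any two matrices X, Y ∈ ℝ^{n×n} with rank(X) ≤ r and rank(Y) ≤ r: |(1/m)·Σ_{i=1}^m ⟨A_i, X⟩·⟨A_i, Y⟩ − ⟨X, Y⟩| ≤ δ·‖X‖_F·‖Y‖_F. -/
open Matrix MeasureTheory BigOperators

/-- Matrix inner product `⟨A, X⟩ = trace(Aᵀ X)`. -/
noncomputable def mip {n : ℕ} (A X : Matrix (Fin n) (Fin n) ℝ) : ℝ :=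
  (Aᵀ * X).trace

/-- Frobenius norm of a real matrix. -/
noncomputable def frob {n₁ n₂ : ℕ} (M : Matrix (Fin n₁) (Fin n₂) ℝ) : ℝ :=
  Real.sqrt (∑ i, ∑ j, (M i j) ^ 2)

/-- `(k, δ)`-restricted isometry property of the measurement operator `A`. -/
def RIP {n m : ℕ} (A : Fin m → Matrix (Fin n) (Fin n) ℝ) (k : ℕ) (δ : ℝ) : Prop :=
  ∀ X : Matrix (Fin n) (Fin n) ℝ, X.rank ≤ k →
    (1 - δ) * frob X ^ 2 ≤ (1 / (m : ℝ)) * ∑ i, mip (A i) X ^ 2 ∧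
    (1 / (m : ℝ)) * ∑ i, mip (A i) X ^ 2 ≤ (1 + δ) * frob X ^ 2

/-- Objective `f(U) = ∑ i, (⟨A i, U Uᵀ⟩ - y i)²`. -/
noncomputable def fobj {n m r : ℕ} (A : Fin m → Matrix (Fin n) (Fin n) ℝ) (y : Fin m → ℝ)
    (U : Matrix (Fin n) (Fin r) ℝ) : ℝ :=
  ∑ i, (mip (A i) (U * Uᵀ) - y i) ^ 2


lemma mip_eq {n : ℕ} (A X : Matrix (Fin n) (Fin n) ℝ) :
    mip A X = ∑ j, ∑ k, A k j * X k j := by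
  simp [mip, Matrix.trace, Matrix.mul_apply, Matrix.diag, Matrix.transpose_apply]

lemma mip_add_right {n : ℕ} (A X Y : Matrix (Fin n) (Fin n) ℝ) :
    mip A (X + Y) = mip A X + mip A Y := by
  simp [mip, Matrix.mul_add]

lemma mip_smul_right {n : ℕ} (A X : Matrix (Fin n) (Fin n) ℝ) (c : ℝ) :
    mip A (c • X) = c * mip A X := by
  simp [mip, Matrix.mul_smul]

lemma mip_comm {n : ℕ} (X Y : Matrix (Fin n) (Fin n) ℝ) : mip X Y = mip Y X := by
  rw [mip, mip, ← Matrix.trace_transpose, Matrix.transpose_mul, Matrix.transpose_transpose]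

lemma frob_sq {n : ℕ} (M : Matrix (Fin n) (Fin n) ℝ) : frob M ^ 2 = mip M M := by
  rw [frob, Real.sq_sqrt (by positivity), mip_eq, Finset.sum_comm]
  simp [sq]

lemma frob_pos {n₁ n₂ : ℕ} {M : Matrix (Fin n₁) (Fin n₂) ℝ} (h : M ≠ 0) : 0 < frob M := by
  rw [frob]
  apply Real.sqrt_pos.2
  obtain ⟨i, j, hij⟩ : ∃ i j, M i j ≠ 0 := by
    by_contra hc
    push_neg at hc
    exact h (by ext i j; simp [hc])
  calc (0:ℝ) < M i j ^ 2 := by positivity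
    _ ≤ ∑ j', M i j' ^ 2 :=
        Finset.single_le_sum (f := fun j' => M i j' ^ 2)
          (fun _ _ => by positivity) (Finset.mem_univ j)
    _ ≤ ∑ i', ∑ j', M i' j' ^ 2 :=
        Finset.single_le_sum (f := fun i' => ∑ j', M i' j' ^ 2)
          (fun _ _ => by positivity) (Finset.mem_univ i)

lemma matrix_rank_add_le {n : ℕ} (P Q : Matrix (Fin n) (Fin n) ℝ) :
    (P + Q).rank ≤ P.rank + Q.rank := by
  rw [Matrix.rank, Matrix.rank, Matrix.rank]
  have h : LinearMap.range (P + Q).mulVecLin ≤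
      LinearMap.range P.mulVecLin ⊔ LinearMap.range Q.mulVecLin := by
    rintro x ⟨v, rfl⟩
    rw [Matrix.mulVecLin_add]
    exact Submodule.add_mem_sup ⟨v, rfl⟩ ⟨v, rfl⟩
  exact (Submodule.finrank_mono h).trans
    (Submodule.finrank_add_le_finrank_add_finrank _ _)

lemma matrix_rank_smul {n : ℕ} (M : Matrix (Fin n) (Fin n) ℝ) {c : ℝ} (hc : c ≠ 0) :
    (c • M).rank = M.rank := by
  have h1 : c • M = M * (c • (1 : Matrix (Fin n) (Fin n) ℝ)) := by
    rw [Matrix.mul_smul, Matrix.mul_one]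
  rw [h1]
  apply Matrix.rank_mul_eq_left_of_isUnit_det
  have hdet : (c • (1 : Matrix (Fin n) (Fin n) ℝ)).det = c ^ n := by
    simp [Matrix.det_smul]
  rw [hdet]
  exact isUnit_iff_ne_zero.2 (pow_ne_zero _ hc)

lemma mip_comb {n : ℕ} (X Y : Matrix (Fin n) (Fin n) ℝ) (c d : ℝ) :
    mip (c • X + d • Y) (c • X + d • Y) =
      c ^ 2 * mip X X + 2 * c * d * mip X Y + d ^ 2 * mip Y Y := by
  have h1 : mip (c • X + d • Y) (c • X + d • Y)
      = ∑ j, ∑ k, (c * X k j + d * Y k j) * (c * X k j + d * Y k j) := by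
    simp [mip_eq]
  rw [h1, mip_eq, mip_eq, mip_eq, Finset.mul_sum, Finset.mul_sum, Finset.mul_sum,
    ← Finset.sum_add_distrib, ← Finset.sum_add_distrib]
  refine Finset.sum_congr rfl fun j _ => ?_
  rw [Finset.mul_sum, Finset.mul_sum, Finset.mul_sum, ← Finset.sum_add_distrib,
    ← Finset.sum_add_distrib]
  exact Finset.sum_congr rfl fun k _ => by ring

/-- RIP implies restricted near-orthogonality of the measurements (Lemma 2.1 style). -/
theorem rip_inner_product_bound {n m r : ℕ} (hn : 0 < n) (hm : 0 < m) (hr : 0 < r)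
    (A : Fin m → Matrix (Fin n) (Fin n) ℝ)
    (δ : ℝ) (hRIP : RIP A (2 * r) δ)
    (X Y : Matrix (Fin n) (Fin n) ℝ) (hXr : X.rank ≤ r) (hYr : Y.rank ≤ r) :
    |(1 / (m : ℝ)) * ∑ i, mip (A i) X * mip (A i) Y - mip X Y| ≤ δ * frob X * frob Y := by
  rcases eq_or_ne X 0 with rfl | hX
  · simp [mip, frob]
  rcases eq_or_ne Y 0 with rfl | hY
  · simp [mip, frob]
  set a := frob X with ha'
  set b := frob Y with hb'
  have ha : 0 < a := frob_pos hX
  have hb : 0 < b := frob_pos hY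
  set P := b • X + a • Y with hPdef
  set Q := b • X + (-a) • Y with hQdef
  have hrP : P.rank ≤ 2 * r := by
    refine le_trans (matrix_rank_add_le _ _) ?_
    rw [matrix_rank_smul X hb.ne', matrix_rank_smul Y ha.ne']
    omega
  have hrQ : Q.rank ≤ 2 * r := by
    refine le_trans (matrix_rank_add_le _ _) ?_
    rw [matrix_rank_smul X hb.ne', matrix_rank_smul Y (neg_ne_zero.2 ha.ne')]
    omega
  obtain ⟨hP1, hP2⟩ := hRIP P hrP
  obtain ⟨hQ1, hQ2⟩ := hRIP Q hrQ
  have hXX : mip X X = a ^ 2 := by rw [← frob_sq]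
  have hYY : mip Y Y = b ^ 2 := by rw [← frob_sq]
  have hfP : frob P ^ 2 = 2 * (a ^ 2 * b ^ 2) + 2 * a * b * mip X Y := by
    rw [frob_sq, hPdef, mip_comb, hXX, hYY]; ring
  have hfQ : frob Q ^ 2 = 2 * (a ^ 2 * b ^ 2) - 2 * a * b * mip X Y := by
    rw [frob_sq, hQdef, mip_comb, hXX, hYY]; ring
  have hSP : (1 / (m : ℝ)) * ∑ i, mip (A i) P ^ 2
      = (1 / (m : ℝ)) * ∑ i, (b * mip (A i) X + a * mip (A i) Y) ^ 2 := by
    congr 1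
    refine Finset.sum_congr rfl fun i _ => ?_
    rw [hPdef, mip_add_right, mip_smul_right, mip_smul_right]
  have hSQ : (1 / (m : ℝ)) * ∑ i, mip (A i) Q ^ 2
      = (1 / (m : ℝ)) * ∑ i, (b * mip (A i) X - a * mip (A i) Y) ^ 2 := by
    congr 1
    refine Finset.sum_congr rfl fun i _ => ?_
    rw [hQdef, mip_add_right, mip_smul_right, mip_smul_right]
    ring
  rw [hfP, hSP] at hP1 hP2
  rw [hfQ, hSQ] at hQ1 hQ2
  have key : (1 / (m : ℝ)) * ∑ i, (b * mip (A i) X + a * mip (A i) Y) ^ 2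
      - (1 / (m : ℝ)) * ∑ i, (b * mip (A i) X - a * mip (A i) Y) ^ 2
      = 4 * a * b * ((1 / (m : ℝ)) * ∑ i, mip (A i) X * mip (A i) Y) := by
    have hcg : ∑ i, ((b * mip (A i) X + a * mip (A i) Y) ^ 2
        - (b * mip (A i) X - a * mip (A i) Y) ^ 2)
        = ∑ i, 4 * a * b * (mip (A i) X * mip (A i) Y) :=
      Finset.sum_congr rfl fun i _ => by ring
    rw [← mul_sub, ← Finset.sum_sub_distrib, hcg, Finset.mul_sum, Finset.mul_sum,
      Finset.mul_sum]
    exact Finset.sum_congr rfl fun i _ => by ring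
  rw [abs_le]
  constructor
  · nlinarith [mul_pos ha hb, hP1, hQ2, key]
  · nlinarith [mul_pos ha hb, hP2, hQ1, key]
end

section
/- Let U and Y be n×r real matrices such that Uᵀ·Y = Yᵀ·U and Uᵀ·Y is positive semidefinite. Then ‖(U − Y)·Uᵀ‖_F² ≤ (1/(2(√2 − 1)))·‖U·Uᵀ − Y·Yᵀ‖_F². -/
open Matrix MeasureTheory BigOperators

/-!
Write `D = U - Y`, `K = Uᵀ D` and `S = Dᵀ D`; the hypothesis `UᵀY = YᵀU` makes `K` symmetric.
Since `U Uᵀ - Y Yᵀ = D Uᵀ + U Dᵀ - D Dᵀ`, expanding and cycling traces gives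
`‖U Uᵀ - Y Yᵀ‖² = 2a + 2‖K‖² - 4⟨K, S⟩ + ‖S‖²` with `a = ‖D Uᵀ‖²`.
From `UᵀU = UᵀY + K` we get `a = ⟨UᵀY, S⟩ + ⟨K, S⟩ ≥ ⟨K, S⟩`, the inner product of two
positive semidefinite matrices being nonnegative. Cauchy–Schwarz `⟨K, S⟩ ≤ ‖K‖ ‖S‖` and
AM–GM `2√2 ‖K‖ ‖S‖ ≤ 2‖K‖² + ‖S‖²` then yield `2(√2 - 1) a ≤ ‖U Uᵀ - Y Yᵀ‖²`.
-/

section Trace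

variable {m n : Type*} [Fintype m] [Fintype n]

lemma trace_transpose_mul_eq_sum (A B : Matrix m n ℝ) :
    (Aᵀ * B).trace = ∑ i, ∑ j, A i j * B i j := by
  simp only [trace, diag, mul_apply, transpose_apply]
  exact Finset.sum_comm

lemma trace_transpose_mul_self_nonneg (A : Matrix m n ℝ) : 0 ≤ (Aᵀ * A).trace := by
  rw [trace_transpose_mul_eq_sum]
  exact Finset.sum_nonneg fun i _ ↦ Finset.sum_nonneg fun j _ ↦ mul_self_nonneg (A i j)

lemma sq_trace_transpose_mul_le (A B : Matrix m n ℝ) :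
    (Aᵀ * B).trace ^ 2 ≤ (Aᵀ * A).trace * (Bᵀ * B).trace := by
  simp only [trace_transpose_mul_eq_sum, ← sq, ← Fintype.sum_prod_type']
  exact Finset.sum_mul_sq_le_sq_mul_sq _ _ _

lemma trace_mul_mul_mul_comm (A : Matrix m n ℝ) (B C : Matrix n m ℝ) :
    (A * B * (A * C)).trace = (B * A * (C * A)).trace := by
  rw [Matrix.mul_assoc, trace_mul_comm]
  simp only [Matrix.mul_assoc]

lemma trace_sq_add_transpose_sub (P Q : Matrix n n ℝ) (hQ : Qᵀ = Q) :
    ((P + Pᵀ - Q)ᵀ * (P + Pᵀ - Q)).trace =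
      2 * (Pᵀ * P).trace + 2 * (P * P).trace - 4 * (P * Q).trace + (Q * Q).trace := by
  have hPtPt : (Pᵀ * Pᵀ).trace = (P * P).trace := trace_transpose_mul P P
  have hPPt : (P * Pᵀ).trace = (Pᵀ * P).trace := trace_mul_comm P Pᵀ
  have hPtQ : (Pᵀ * Q).trace = (P * Q).trace := by
    rw [← trace_transpose, transpose_mul, transpose_transpose, hQ, trace_mul_comm]
  have hQP : (Q * P).trace = (P * Q).trace := trace_mul_comm Q P
  have hQPt : (Q * Pᵀ).trace = (P * Q).trace := by rw [trace_mul_comm, hPtQ]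
  rw [transpose_sub, hQ]
  simp only [transpose_add, transpose_transpose, add_mul, mul_add, sub_mul, mul_sub, trace_add,
    trace_sub, hPtPt, hPPt, hPtQ, hQP, hQPt]
  ring

lemma Matrix.PosSemidef.trace_mul_transpose_mul_self_nonneg {C : Matrix n n ℝ}
    (hC : C.PosSemidef) (D : Matrix m n ℝ) : 0 ≤ (C * (Dᵀ * D)).trace := by
  rw [← Matrix.mul_assoc, trace_mul_comm, ← Matrix.mul_assoc]
  simpa using (hC.mul_mul_conjTranspose_same D).trace_nonneg

end Trace

section Factor

variable {m r : Type*} [Fintype m] [Fintype r] {U D : Matrix m r ℝ}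

lemma trace_sq_gram_sub_gram (hK : (Uᵀ * D)ᵀ = Uᵀ * D) :
    ((U * Uᵀ - (U - D) * (U - D)ᵀ)ᵀ * (U * Uᵀ - (U - D) * (U - D)ᵀ)).trace =
      2 * ((D * Uᵀ)ᵀ * (D * Uᵀ)).trace + 2 * ((Uᵀ * D)ᵀ * (Uᵀ * D)).trace
        - 4 * ((Uᵀ * D)ᵀ * (Dᵀ * D)).trace + ((Dᵀ * D)ᵀ * (Dᵀ * D)).trace := by
  have hM : U * Uᵀ - (U - D) * (U - D)ᵀ = D * Uᵀ + (D * Uᵀ)ᵀ - D * Dᵀ := by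
    simp only [transpose_mul, transpose_sub, transpose_transpose, Matrix.sub_mul, Matrix.mul_sub]
    abel
  rw [hM, trace_sq_add_transpose_sub _ _ (by rw [transpose_mul, transpose_transpose]),
    trace_mul_mul_mul_comm, trace_mul_mul_mul_comm D Uᵀ, trace_mul_mul_mul_comm D Dᵀ, hK,
    transpose_mul Dᵀ D, transpose_transpose, Matrix.mul_assoc]

lemma trace_sq_mul_transpose (hK : (Uᵀ * D)ᵀ = Uᵀ * D) :
    ((D * Uᵀ)ᵀ * (D * Uᵀ)).trace =
      (Uᵀ * (U - D) * (Dᵀ * D)).trace + ((Uᵀ * D)ᵀ * (Dᵀ * D)).trace := by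
  have hUU : Uᵀ * U = Uᵀ * (U - D) + Uᵀ * D := by rw [Matrix.mul_sub, sub_add_cancel]
  rw [transpose_mul, transpose_transpose, ← Matrix.mul_assoc, trace_mul_comm,
    show Uᵀ * (U * Dᵀ * D) = Uᵀ * U * (Dᵀ * D) by simp only [Matrix.mul_assoc], hUU,
    Matrix.add_mul, trace_add, hK]

end Factor

lemma two_mul_sqrt_two_mul_le {k s t : ℝ} (hk : 0 ≤ k) (hs : 0 ≤ s) (hcs : t ^ 2 ≤ k * s) :
    2 * √2 * t ≤ 2 * k + s := by
  have h2 : √2 ^ 2 = 2 := Real.sq_sqrt (by norm_num)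
  refine le_of_sq_le_sq ?_ (by positivity)
  calc (2 * √2 * t) ^ 2 = 8 * t ^ 2 := by rw [mul_pow, mul_pow, h2]; ring
    _ ≤ 8 * (k * s) := by gcongr
    _ ≤ (2 * k + s) ^ 2 := by nlinarith [sq_nonneg (2 * k - s)]

lemma le_one_div_two_mul_sqrt_two_sub_one_mul {a k s t : ℝ} (hk : 0 ≤ k) (hs : 0 ≤ s)
    (hta : t ≤ a) (hcs : t ^ 2 ≤ k * s) :
    a ≤ 1 / (2 * (√2 - 1)) * (2 * a + 2 * k - 4 * t + s) := by
  have hamgm := two_mul_sqrt_two_mul_le hk hs hcs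
  have h1 : 1 < √2 := by rw [Real.lt_sqrt] <;> norm_num
  have h2 : √2 < 2 := by rw [Real.sqrt_lt'] <;> norm_num
  rw [one_div_mul_eq_div, le_div_iff₀ (by linarith)]
  nlinarith

lemma frob_sq_eq_trace {n₁ n₂ : ℕ} (X : Matrix (Fin n₁) (Fin n₂) ℝ) :
    frob X ^ 2 = (Xᵀ * X).trace := by
  rw [frob, Real.sq_sqrt (by positivity), trace_transpose_mul_eq_sum]
  simp only [sq]

theorem factor_distance_bound_general {n r : ℕ}
    (U Y : Matrix (Fin n) (Fin r) ℝ)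
    (hsym : Uᵀ * Y = Yᵀ * U) (hpsd : (Uᵀ * Y).PosSemidef) :
    frob ((U - Y) * Uᵀ) ^ 2 ≤
      (1 / (2 * (Real.sqrt 2 - 1))) * frob (U * Uᵀ - Y * Yᵀ) ^ 2 := by
  obtain ⟨D, rfl⟩ : ∃ D, Y = U - D := ⟨U - Y, (sub_sub_cancel U Y).symm⟩
  have hK : (Uᵀ * D)ᵀ = Uᵀ * D := by
    simpa [Matrix.mul_sub, Matrix.sub_mul] using hsym.symm
  rw [sub_sub_cancel, frob_sq_eq_trace, frob_sq_eq_trace, trace_sq_gram_sub_gram hK]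
  refine le_one_div_two_mul_sqrt_two_sub_one_mul (trace_transpose_mul_self_nonneg _)
    (trace_transpose_mul_self_nonneg _) ?_ (sq_trace_transpose_mul_le _ _)
  rw [trace_sq_mul_transpose hK, le_add_iff_nonneg_left]
  exact hpsd.trace_mul_transpose_mul_self_nonneg D

/-- Factor-space vs matrix-space distance comparison (Lemma: `UᵀY = YᵀU` PSD case). -/
theorem factor_distance_bound {n r : ℕ} (hn : 0 < n) (hr : 0 < r)
    (U Y : Matrix (Fin n) (Fin r) ℝ)
    (hsym : Uᵀ * Y = Yᵀ * U) (hpsd : (Uᵀ * Y).PosSemidef) :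
    frob ((U - Y) * Uᵀ) ^ 2 ≤
      (1 / (2 * (Real.sqrt 2 - 1))) * frob (U * Uᵀ - Y * Yᵀ) ^ 2 :=
  factor_distance_bound_general U Y hsym hpsd
end
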